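/- arXiv:1305.6530 — 7 statements merged into one kernel-verified Lean document; each statement's English description precedes it below -/
import Mathlib

section
/- If x and y are proximal points of a compact metric dynamical system (X,T) and y is uniformly recurrent, then there exists a strictly increasing sequence (n_i) of natural numbers such that the IP-limit of T^n x along finite sums of (n_i) equals y; that is, for every ε > 0 there exists k such that for every nonempty finite sum n of terms n_i with i ≥ k (distinct indices), d(T^n x, y) < ε. -/
/-!
Choose `n₀ < n₁ < ⋯` one at a time, each larger than the sum `M` of its predecessors and
such that `T^[n_m] x` and `T^[n_m] y` both follow the orbit of `y` within `2⁻ᵐ` for `M` steps;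
such `n_m` exist because proximality and uniform recurrence make `T^[n] x` and `T^[n] y`
simultaneously close to `y` for arbitrarily large `n`. Peeling off the largest index of a
finite sum and using the triangle inequality then shows by induction that
`dist (T^[∑ i ∈ F, n_i] x) y ≤ ∑ i ∈ F, 2⁻ⁱ`, and these bounds are tails of a convergent series.
-/

/-- A set `S ⊆ ℕ` is syndetic if it has bounded gaps. -/
def Syndetic (S : Set ℕ) : Prop :=
  ∃ m : ℕ, ∀ x : ℕ, ∃ n ∈ S, x ≤ n ∧ n ≤ x + m

/-- A point `y` is uniformly recurrent for `T` if all its ε-return-time sets are syndetic. -/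
def UniformlyRecurrent {X : Type*} [MetricSpace X] (T : X → X) (y : X) : Prop :=
  ∀ ε : ℝ, 0 < ε → Syndetic {n : ℕ | dist (T^[n] y) y < ε}

/-- Points `x, y` are proximal: for every `ε > 0` there are infinitely many `n`
with `dist (T^[n] x) (T^[n] y) < ε`. -/
def Proximal {X : Type*} [MetricSpace X] (T : X → X) (x y : X) : Prop :=
  ∀ ε : ℝ, 0 < ε → ∀ N : ℕ, ∃ n ≥ N, dist (T^[n] x) (T^[n] y) < ε

/-- `FS a k` is the set of all finite sums of terms of `a` with distinct indices `≥ k`. -/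
def FS (a : ℕ → ℕ) (k : ℕ) : Set ℕ :=
  {s | ∃ F : Finset ℕ, F.Nonempty ∧ (∀ i ∈ F, k ≤ i) ∧ s = ∑ i ∈ F, a i}

/-- The orbit closure of a point `y` under `T`. -/
def orbitClosure {X : Type*} [TopologicalSpace X] (T : X → X) (y : X) : Set X :=
  closure (Set.range fun n : ℕ => T^[n] y)

open Finset

section Iterates

variable {X : Type*} [MetricSpace X] {T : X → X}

theorem exists_pos_forall_dist_iterate_lt [CompactSpace X] (hT : Continuous T) (M : ℕ)
    {η : ℝ} (hη : 0 < η) :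
    ∃ δ > 0, ∀ u v, dist u v < δ → ∀ s ≤ M, dist (T^[s] u) (T^[s] v) < η := by
  have hequi : UniformEquicontinuous fun s : Fin (M + 1) => T^[s] :=
    uniformEquicontinuous_finite.2 fun s =>
      CompactSpace.uniformContinuous_of_continuous (hT.iterate s)
  obtain ⟨δ, hδ, H⟩ := Metric.uniformEquicontinuous_iff.1 hequi η hη
  exact ⟨δ, hδ, fun u v huv s hs => H u v huv ⟨s, Nat.lt_succ_of_le hs⟩⟩

theorem Proximal.exists_ge_dist_iterate_lt [CompactSpace X] (hT : Continuous T) {x y : X}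
    (hprox : Proximal T x y) (hur : UniformlyRecurrent T y) {ε : ℝ} (hε : 0 < ε) (N : ℕ) :
    ∃ n ≥ N, dist (T^[n] x) y < ε ∧ dist (T^[n] y) y < ε := by
  obtain ⟨L, hL⟩ := hur (ε / 2) (half_pos hε)
  obtain ⟨δ, hδ, hT_δ⟩ := exists_pos_forall_dist_iterate_lt hT L (half_pos hε)
  obtain ⟨n, hnN, hn⟩ := hprox δ hδ N
  -- a return time of `y` within `L` steps after `n` keeps `x` and `y` together
  obtain ⟨n', hn'y, hnn', hn'L⟩ := hL n
  have hsplit : ∀ z, T^[n'] z = T^[n' - n] (T^[n] z) := fun z => by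
    rw [← Function.iterate_add_apply, Nat.sub_add_cancel hnn']
  have hxy : dist (T^[n'] x) (T^[n'] y) < ε / 2 := by
    rw [hsplit, hsplit y]
    exact hT_δ _ _ hn _ (by omega)
  refine ⟨n', hnN.trans hnn', ?_, hn'y.trans (half_lt_self hε)⟩
  calc dist (T^[n'] x) y ≤ dist (T^[n'] x) (T^[n'] y) + dist (T^[n'] y) y := dist_triangle _ _ _
    _ < ε / 2 + ε / 2 := add_lt_add hxy hn'y
    _ = ε := add_halves ε

theorem Proximal.exists_ge_forall_dist_iterate_iterate_lt [CompactSpace X] (hT : Continuous T)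
    {x y : X} (hprox : Proximal T x y) (hur : UniformlyRecurrent T y) (M : ℕ) {η : ℝ}
    (hη : 0 < η) (N : ℕ) :
    ∃ n ≥ N, ∀ s ≤ M,
      dist (T^[s] (T^[n] x)) (T^[s] y) < η ∧ dist (T^[s] (T^[n] y)) (T^[s] y) < η := by
  obtain ⟨δ, hδ, hT_δ⟩ := exists_pos_forall_dist_iterate_lt hT M hη
  obtain ⟨n, hnN, hx, hy⟩ := hprox.exists_ge_dist_iterate_lt hT hur hδ N
  exact ⟨n, hnN, fun s hs => ⟨hT_δ _ _ hx s hs, hT_δ _ _ hy s hs⟩⟩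

variable {a : ℕ → ℕ} {r : ℕ → ℝ} {y : X}

theorem dist_iterate_sum_insert_le {z : X}
    (hz : ∀ m, ∀ s ≤ ∑ i ∈ range m, a i, dist (T^[s] (T^[a m] z)) (T^[s] y) < r m)
    {m : ℕ} {G : Finset ℕ} (hG : ∀ i ∈ G, i < m) :
    dist (T^[∑ i ∈ insert m G, a i] z) y ≤ r m + dist (T^[∑ i ∈ G, a i] y) y := by
  have hmG : m ∉ G := fun h => (hG m h).false
  have hGM : ∑ i ∈ G, a i ≤ ∑ i ∈ range m, a i :=
    sum_le_sum_of_subset fun i hi => mem_range.2 (hG i hi)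
  rw [sum_insert hmG, add_comm, Function.iterate_add_apply]
  exact (dist_triangle _ _ _).trans (add_le_add_left (hz m _ hGM).le _)

theorem dist_iterate_sum_le_sum
    (hy : ∀ m, ∀ s ≤ ∑ i ∈ range m, a i, dist (T^[s] (T^[a m] y)) (T^[s] y) < r m)
    (F : Finset ℕ) : dist (T^[∑ i ∈ F, a i] y) y ≤ ∑ i ∈ F, r i := by
  induction F using Finset.induction_on_max with
  | empty => simp
  | insert m G hG ih =>
    rw [sum_insert (f := r) fun h => (hG m h).false]
    exact (dist_iterate_sum_insert_le hy hG).trans (add_le_add_right ih _)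

theorem dist_iterate_sum_le_sum_of_nonempty {x : X}
    (hx : ∀ m, ∀ s ≤ ∑ i ∈ range m, a i, dist (T^[s] (T^[a m] x)) (T^[s] y) < r m)
    (hy : ∀ m, ∀ s ≤ ∑ i ∈ range m, a i, dist (T^[s] (T^[a m] y)) (T^[s] y) < r m)
    {F : Finset ℕ} (hF : F.Nonempty) : dist (T^[∑ i ∈ F, a i] x) y ≤ ∑ i ∈ F, r i := by
  induction F using Finset.induction_on_max with
  | empty => exact absurd hF Finset.not_nonempty_empty
  | insert m G hG _ =>
    rw [sum_insert (f := r) fun h => (hG m h).false]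
    exact (dist_iterate_sum_insert_le hx hG).trans
      (add_le_add_right (dist_iterate_sum_le_sum hy G) _)

end Iterates

theorem exists_strictMono_forall_sum_range {P : ℕ → ℕ → ℕ → Prop}
    (h : ∀ M m, ∃ n > M, P M m n) :
    ∃ a : ℕ → ℕ, StrictMono a ∧ ∀ m, P (∑ i ∈ range m, a i) m (a m) := by
  choose g hg_gt hg using h
  let S : ℕ → ℕ := fun m => Nat.rec 0 (fun m s => s + g s m) m
  have hS : ∀ m, ∑ i ∈ range m, g (S i) i = S m := by
    intro m
    induction m with
    | zero => rfl
    | succ m ih => rw [sum_range_succ, ih]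
  refine ⟨fun m => g (S m) m, strictMono_nat_of_lt_succ fun m => ?_, fun m => hS m ▸ hg _ _⟩
  have hS_succ : S (m + 1) = S m + g (S m) m := rfl
  have hgt := hg_gt (S (m + 1)) (m + 1)
  omega

theorem Summable.exists_forall_sum_lt {r : ℕ → ℝ} (hr : Summable r) {ε : ℝ} (hε : 0 < ε) :
    ∃ k, ∀ F : Finset ℕ, (∀ i ∈ F, k ≤ i) → ∑ i ∈ F, r i < ε := by
  obtain ⟨s, hs⟩ := summable_iff_vanishing_norm.1 hr ε hε
  obtain ⟨k, hsk⟩ := s.exists_nat_subset_range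
  refine ⟨k, fun F hF => (le_abs_self _).trans_lt (hs F ?_)⟩
  exact disjoint_left.2 fun i hiF his => (hF i hiF).not_gt (mem_range.1 (hsk his))

/-- If `x, y` are proximal and `y` is uniformly recurrent, then there is a strictly
increasing sequence `(n_i)` with `IP-lim_{n → FS((n_i))} T^[n] x = y`. -/
theorem stmt2 {X : Type*} [MetricSpace X] [CompactSpace X]
    (T : X → X) (hT : Continuous T) (x y : X)
    (hprox : Proximal T x y) (hur : UniformlyRecurrent T y) :
    ∃ a : ℕ → ℕ, StrictMono a ∧
      ∀ ε : ℝ, 0 < ε → ∃ k : ℕ, ∀ s ∈ FS a k, dist (T^[s] x) y < ε := by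
  obtain ⟨a, ha_mono, ha⟩ := exists_strictMono_forall_sum_range fun M m =>
    hprox.exists_ge_forall_dist_iterate_iterate_lt hT hur M (pow_pos one_half_pos m) (M + 1)
  refine ⟨a, ha_mono, fun ε hε => ?_⟩
  obtain ⟨k, hk⟩ := summable_geometric_two.exists_forall_sum_lt hε
  refine ⟨k, ?_⟩
  rintro s ⟨F, hF, hFk, rfl⟩
  exact (dist_iterate_sum_le_sum_of_nonempty (r := fun i => (1 / 2 : ℝ) ^ i) (fun m s hs => (ha m s hs).1)
    (fun m s hs => (ha m s hs).2) hF).trans_lt (hk F hFk)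
end

section
/- If x and y are proximal and y is uniformly recurrent in a compact metric dynamical system (X,T), then for every open neighborhood U of y there exists p ∈ ℕ with T^p x ∈ U and T^p y ∈ U. -/
open Metric

theorem exists_pos_forall_dist_iterate_lt_s3 {X : Type*} [PseudoMetricSpace X] {T : X → X}
    (hT : UniformContinuous T) (m : ℕ) {ε : ℝ} (hε : 0 < ε) :
    ∃ δ > 0, ∀ a b : X, dist a b < δ → ∀ j ≤ m, dist (T^[j] a) (T^[j] b) < ε := by
  have hequi : UniformEquicontinuous fun j : Fin (m + 1) => T^[j] :=
    uniformEquicontinuous_finite.mpr fun j => hT.iterate T j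
  obtain ⟨δ, hδ, hclose⟩ := uniformEquicontinuous_iff.mp hequi ε hε
  exact ⟨δ, hδ, fun a b hab j hj => hclose a b hab ⟨j, Nat.lt_succ_of_le hj⟩⟩

theorem Proximal.exists_iterate_dist_lt_of_uniformlyRecurrent {X : Type*} [MetricSpace X]
    {T : X → X} (hT : UniformContinuous T) {x y : X} (hprox : Proximal T x y)
    (hur : UniformlyRecurrent T y) {ε : ℝ} (hε : 0 < ε) :
    ∃ p, dist (T^[p] x) (T^[p] y) < ε ∧ dist (T^[p] y) y < ε := by
  obtain ⟨m, hgap⟩ := hur ε hε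
  obtain ⟨δ, hδ, hequi⟩ := exists_pos_forall_dist_iterate_lt_s3 hT m hε
  obtain ⟨n, -, hn⟩ := hprox δ hδ 0
  obtain ⟨r, hr, hnr, hrm⟩ := hgap n
  refine ⟨r, ?_, hr⟩
  obtain ⟨j, rfl⟩ := Nat.exists_eq_add_of_le' hnr
  rw [Function.iterate_add_apply, Function.iterate_add_apply]
  exact hequi _ _ hn j (by omega)

/-- If `x, y` are proximal and `y` is uniformly recurrent, then for every open
neighborhood `U` of `y` there is `p` with `T^[p] x ∈ U` and `T^[p] y ∈ U`. -/
theorem stmt3 {X : Type*} [MetricSpace X] [CompactSpace X]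
    (T : X → X) (hT : Continuous T) (x y : X)
    (hprox : Proximal T x y) (hur : UniformlyRecurrent T y)
    (U : Set X) (hU : IsOpen U) (hyU : y ∈ U) :
    ∃ p : ℕ, T^[p] x ∈ U ∧ T^[p] y ∈ U := by
  obtain ⟨ε, hε, hball⟩ := isOpen_iff.mp hU y hyU
  obtain ⟨p, hxy, hy⟩ := hprox.exists_iterate_dist_lt_of_uniformlyRecurrent
    (CompactSpace.uniformContinuous_of_continuous hT) hur (half_pos hε)
  refine ⟨p, hball ?_, hball ?_⟩
  · calc dist (T^[p] x) y ≤ dist (T^[p] x) (T^[p] y) + dist (T^[p] y) y := dist_triangle _ _ _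
      _ < ε / 2 + ε / 2 := add_lt_add hxy hy
      _ = ε := add_halves ε
  · exact lt_trans hy (half_lt_self hε)
end

section
/- Let (n_i) be a strictly increasing sequence of natural numbers and F = {X ⊆ ℕ | ∃k, FS((n_i)_{i≥k}) ⊆ X}. Then F is idempotent in the sense that for every X ∈ F, the set {n ∈ ℕ | X − n ∈ F} belongs to F, where X − n = {m ∈ ℕ | m + n ∈ X}. -/
theorem exists_forall_add_mem_FS {a : ℕ → ℕ} {k n : ℕ} (hn : n ∈ FS a k) :
    ∃ j, ∀ m ∈ FS a j, m + n ∈ FS a k := by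
  obtain ⟨F, hFne, hFk, rfl⟩ := hn
  refine ⟨F.max' hFne + 1, ?_⟩
  rintro m ⟨G, hGne, hGj, rfl⟩
  have hdisj : Disjoint G F := Finset.disjoint_left.2 fun i hiG hiF => by
    have := hGj i hiG
    have := F.le_max' i hiF
    omega
  refine ⟨G ∪ F, hGne.mono Finset.subset_union_left, ?_, (Finset.sum_union hdisj).symm⟩
  intro i hi
  rcases Finset.mem_union.1 hi with hiG | hiF
  · have := hGj i hiG
    have := hFk _ (F.max'_mem hFne)
    omega
  · exact hFk i hiF

theorem stmt5_general (a : ℕ → ℕ) :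
    ∀ X : Set ℕ, X ∈ {X : Set ℕ | ∃ k, FS a k ⊆ X} →
      {n : ℕ | {m : ℕ | m + n ∈ X} ∈ {X : Set ℕ | ∃ k, FS a k ⊆ X}}
        ∈ {X : Set ℕ | ∃ k, FS a k ⊆ X} := by
  rintro X ⟨k, hk⟩
  refine ⟨k, fun n hn => ?_⟩
  obtain ⟨j, hj⟩ := exists_forall_add_mem_FS hn
  exact ⟨j, fun m hm => hk (hj m hm)⟩

/-- The filter `F = {X | ∃ k, FS((n_i)_{i≥k}) ⊆ X}` is idempotent:
for every `X ∈ F`, `{n | X − n ∈ F} ∈ F`. -/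
theorem stmt5 (a : ℕ → ℕ) (ha : StrictMono a) :
    ∀ X : Set ℕ, X ∈ {X : Set ℕ | ∃ k, FS a k ⊆ X} →
      {n : ℕ | {m : ℕ | m + n ∈ X} ∈ {X : Set ℕ | ∃ k, FS a k ⊆ X}}
        ∈ {X : Set ℕ | ∃ k, FS a k ⊆ X} :=
  stmt5_general a
end

section
/- Let U be an ultrafilter on ℕ such that for every X ∈ U the set {n ∈ ℕ | X − n ∈ U} is syndetic (a minimal ultrafilter) and let x, y be points of a compact metric space X with continuous T : X → X such that y = lim_{n→U} T^n x (the limit along U of the sequence T^n x). Then y is uniformly recurrent. -/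
/-!
By continuity, `T^[n] y` is the limit along `U` of `T^[m + n] x`. So if `T^[m + n] x` is
`ε/2`-close to `y` for `U`-many `m`, then `T^[n] y` is `ε`-close to `y`; minimality of `U`
says exactly that these `n` form a syndetic set.
-/

open Filter Topology

theorem Syndetic.mono {S S' : Set ℕ} (hS : Syndetic S) (h : S ⊆ S') : Syndetic S' :=
  let ⟨m, hm⟩ := hS
  ⟨m, fun k => let ⟨n, hn, hkn⟩ := hm k; ⟨n, h hn, hkn⟩⟩

theorem dist_iterate_le_of_eventually_dist_iterate_add_le {α : Type*} [PseudoMetricSpace α]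
    {T : α → α} (hT : Continuous T) {l : Filter ℕ} [l.NeBot] {x y : α}
    (hy : Tendsto (fun m => T^[m] x) l (𝓝 y)) {n : ℕ} {r : ℝ}
    (hn : ∀ᶠ m in l, dist (T^[m + n] x) y ≤ r) :
    dist (T^[n] y) y ≤ r := by
  have hlim : Tendsto (fun m => T^[m + n] x) l (𝓝 (T^[n] y)) := by
    simpa only [Function.comp_def, Function.iterate_add_apply, add_comm] using
      ((hT.iterate n).tendsto y).comp hy
  exact Metric.isClosed_closedBall.mem_of_tendsto hlim hn

theorem stmt7_general (U : Ultrafilter ℕ)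
    (hmin : ∀ X : Set ℕ, X ∈ U → Syndetic {n : ℕ | {m : ℕ | m + n ∈ X} ∈ U})
    {α : Type*} [MetricSpace α]
    (T : α → α) (hT : Continuous T) (x y : α)
    (hy : ∀ ε : ℝ, 0 < ε → {n : ℕ | dist (T^[n] x) y < ε} ∈ U) :
    UniformlyRecurrent T y := by
  intro ε hε
  have hlim : Tendsto (fun m => T^[m] x) U (𝓝 y) := Metric.tendsto_nhds.2 hy
  refine (hmin _ (hy (ε / 2) (half_pos hε))).mono fun n hn => ?_
  have hshift : ∀ᶠ m in U, dist (T^[m + n] x) y < ε / 2 := hn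
  calc dist (T^[n] y) y ≤ ε / 2 :=
        dist_iterate_le_of_eventually_dist_iterate_add_le hT hlim (hshift.mono fun _ => le_of_lt)
    _ < ε := half_lt_self hε

/-- If `U` is a minimal ultrafilter and `y = lim_{n→U} T^[n] x`, then `y` is
uniformly recurrent. -/
theorem stmt7 (U : Ultrafilter ℕ)
    (hmin : ∀ X : Set ℕ, X ∈ U → Syndetic {n : ℕ | {m : ℕ | m + n ∈ X} ∈ U})
    {α : Type*} [MetricSpace α] [CompactSpace α]
    (T : α → α) (hT : Continuous T) (x y : α)
    (hy : ∀ ε : ℝ, 0 < ε → {n : ℕ | dist (T^[n] x) y < ε} ∈ U) :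
    UniformlyRecurrent T y :=
  stmt7_general U hmin T hT x y hy
end

section
/- Let U be an idempotent ultrafilter on ℕ, (X,d) a compact metric space, T : X → X continuous, x ∈ X, and suppose y = lim_{n→U} T^n x exists (limit along U). Then x and y are proximal: for every ε > 0 there are infinitely many n with d(T^n x, T^n y) < ε. -/
open Filter Topology

attribute [local instance] Ultrafilter.add

theorem Ultrafilter.add_self_eq_self_of_forall_mem {U : Ultrafilter ℕ}
    (hU : ∀ s ∈ U, ∀ᶠ n in U, ∀ᶠ m in U, m + n ∈ s) : U + U = U := by
  refine Ultrafilter.eq_of_le fun s hs => ?_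
  change ∀ᶠ n in ((U + U : Ultrafilter ℕ) : Filter ℕ), n ∈ s
  rw [Ultrafilter.eventually_add]
  simpa only [add_comm] using hU s hs

theorem Ultrafilter.eq_pure_zero_or_le_atTop_of_add_self_eq_self {U : Ultrafilter ℕ}
    (hU : U + U = U) : U = pure 0 ∨ (U : Filter ℕ) ≤ atTop := by
  rcases U.le_cofinite_or_eq_pure with hcof | ⟨a, rfl⟩
  · exact Or.inr (Nat.cofinite_eq_atTop ▸ hcof)
  · have haa : a + a = a := by
      have h : ∀ᶠ n in (pure a + pure a : Ultrafilter ℕ), n = a := by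
        rw [hU, Ultrafilter.coe_pure]; exact eventually_pure.2 rfl
      simpa only [Ultrafilter.eventually_add, Ultrafilter.coe_pure, eventually_pure] using h
    exact Or.inl (by rw [show a = 0 by omega])

theorem tendsto_iterate_self_of_tendsto_iterate {X : Type*} [TopologicalSpace X] [RegularSpace X]
    {T : X → X} (hT : Continuous T) {U : Ultrafilter ℕ} (hU : U + U = U) {x y : X}
    (hx : Tendsto (fun n => T^[n] x) U (𝓝 y)) : Tendsto (fun n => T^[n] y) U (𝓝 y) := by
  refine (closed_nhds_basis y).tendsto_right_iff.2 fun W ⟨hWy, hWc⟩ => ?_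
  have hW : ∀ᶠ k in (U + U : Ultrafilter ℕ), T^[k] x ∈ W := by rw [hU]; exact hx hWy
  rw [Ultrafilter.eventually_add] at hW
  filter_upwards [hW] with n hn
  have hshift : Tendsto (fun m => T^[n] (T^[m] x)) U (𝓝 (T^[n] y)) :=
    ((hT.iterate n).tendsto y).comp hx
  exact hWc.mem_of_tendsto hshift (by simpa only [← Function.iterate_add_apply] using hn)

theorem Proximal.refl {X : Type*} [MetricSpace X] (T : X → X) (x : X) : Proximal T x x :=
  fun ε hε N => ⟨N, le_rfl, by simpa using hε⟩

theorem Proximal.of_tendsto {X : Type*} [MetricSpace X] {T : X → X} {F : Filter ℕ} [F.NeBot]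
    (hF : F ≤ atTop) {x y z : X} (hx : Tendsto (fun n => T^[n] x) F (𝓝 z))
    (hy : Tendsto (fun n => T^[n] y) F (𝓝 z)) : Proximal T x y := by
  intro ε hε N
  have hdist : Tendsto (fun n => dist (T^[n] x) (T^[n] y)) F (𝓝 0) := by
    simpa using hx.dist hy
  exact ((eventually_ge_atTop N).filter_mono hF |>.and (hdist.eventually (gt_mem_nhds hε))).exists

theorem stmt8_general (U : Ultrafilter ℕ)
    (hidem : ∀ X : Set ℕ, X ∈ U → {n : ℕ | {m : ℕ | m + n ∈ X} ∈ U} ∈ U)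
    {α : Type*} [MetricSpace α]
    (T : α → α) (hT : Continuous T) (x y : α)
    (hy : ∀ ε : ℝ, 0 < ε → {n : ℕ | dist (T^[n] x) y < ε} ∈ U) :
    Proximal T x y := by
  have hU : U + U = U := Ultrafilter.add_self_eq_self_of_forall_mem hidem
  have hx : Tendsto (fun n => T^[n] x) U (𝓝 y) := Metric.tendsto_nhds.2 hy
  rcases Ultrafilter.eq_pure_zero_or_le_atTop_of_add_self_eq_self hU with rfl | hfree
  · obtain rfl : x = y := tendsto_nhds_unique (tendsto_pure_nhds _ 0) hx
    exact Proximal.refl T x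
  · exact Proximal.of_tendsto hfree hx (tendsto_iterate_self_of_tendsto_iterate hT hU hx)

/-- If `U` is an idempotent ultrafilter and `y = lim_{n→U} T^[n] x`, then `x` and `y`
are proximal. -/
theorem stmt8 (U : Ultrafilter ℕ)
    (hidem : ∀ X : Set ℕ, X ∈ U → {n : ℕ | {m : ℕ | m + n ∈ X} ∈ U} ∈ U)
    {α : Type*} [MetricSpace α] [CompactSpace α]
    (T : α → α) (hT : Continuous T) (x y : α)
    (hy : ∀ ε : ℝ, 0 < ε → {n : ℕ | dist (T^[n] x) y < ε} ∈ U) :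
    Proximal T x y :=
  stmt8_general U hidem T hT x y hy
end

section
/- Let U be a minimal idempotent ultrafilter on ℕ (idempotent, and for every X ∈ U the set {n | X − n ∈ U} is syndetic), let (X,T) be a compact metric dynamical system and x ∈ X. Then y := lim_{n→U} T^n x exists, y is uniformly recurrent, and x, y are proximal. -/
/-!
Let `y` be the `U`-limit of the orbit of `x`, which exists by compactness. If `T^[m + n] x` is
within `δ` of `y` for `U`-many `m`, then, as `T^[m + n] x = T^[n] (T^[m] x) → T^[n] y` along `U`,
also `dist (T^[n] y) y ≤ δ`. So every return-time set of `y` contains a set `{n | X - n ∈ U}`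
with `X ∈ U`. Minimality makes it syndetic; idempotence puts it in `U`, so `T^[n] y → y` along
`U` as well, and `dist (T^[n] x) (T^[n] y) → 0` along `U` gives proximality (`U` is
non-principal unless `U = pure 0`, where `y = x`).
-/

open Filter Topology

/-- Idempotence of `pure c` means `c + c = c`. -/
theorem Ultrafilter.eq_pure_zero_or_le_atTop_of_idempotent (U : Ultrafilter ℕ)
    (hidem : ∀ X : Set ℕ, X ∈ U → {n : ℕ | {m : ℕ | m + n ∈ X} ∈ U} ∈ U) :
    U = pure 0 ∨ (U : Filter ℕ) ≤ atTop := by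
  rw [← Nat.cofinite_eq_atTop]
  obtain hU | ⟨c, rfl⟩ := U.le_cofinite_or_eq_pure
  · exact Or.inr hU
  have hcc : c + c = c := hidem {c} rfl
  exact Or.inl (by rw [show c = 0 by omega])

section Iterate

variable {α : Type*} [MetricSpace α] {T : α → α} {x y : α}

theorem dist_iterate_le_of_tendsto {U : Filter ℕ} [U.NeBot] (hT : Continuous T)
    (hx : Tendsto (fun k => T^[k] x) U (𝓝 y)) (n : ℕ) {δ : ℝ}
    (h : ∀ᶠ m in U, dist (T^[m + n] x) y < δ) : dist (T^[n] y) y ≤ δ := by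
  have hshift : Tendsto (fun m => T^[m + n] x) U (𝓝 (T^[n] y)) := by
    simpa only [Function.comp_def, Function.iterate_add_apply, add_comm _ n] using ((hT.iterate n).tendsto y).comp hx
  exact le_of_tendsto (hshift.dist tendsto_const_nhds) (h.mono fun _ hm => hm.le)

theorem tendsto_iterate_of_tendsto_iterate_of_idempotent (U : Ultrafilter ℕ)
    (hidem : ∀ X : Set ℕ, X ∈ U → {n : ℕ | {m : ℕ | m + n ∈ X} ∈ U} ∈ U)
    (hT : Continuous T) (hx : Tendsto (fun k => T^[k] x) U (𝓝 y)) :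
    Tendsto (fun n => T^[n] y) U (𝓝 y) := by
  refine Metric.tendsto_nhds.2 fun ε hε => ?_
  filter_upwards [hidem _ (Metric.tendsto_nhds.1 hx _ (half_pos hε))] with n hn
  exact (dist_iterate_le_of_tendsto hT hx n hn).trans_lt (half_lt_self hε)

theorem Proximal.refl_s9 (T : α → α) (x : α) : Proximal T x x :=
  fun ε hε N => ⟨N, le_rfl, by simpa using hε⟩

theorem proximal_of_tendsto_dist {U : Filter ℕ} [U.NeBot] (hU : U ≤ atTop)
    (h : Tendsto (fun n => dist (T^[n] x) (T^[n] y)) U (𝓝 0)) : Proximal T x y := by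
  intro ε hε N
  exact ((h.eventually (gt_mem_nhds hε)).and (hU (eventually_ge_atTop N))).exists.imp
    fun n hn => ⟨hn.2, hn.1⟩

end Iterate

/-- For a minimal idempotent ultrafilter `U`, the limit `y = lim_{n→U} T^[n] x` exists,
is uniformly recurrent, and is proximal to `x`. -/
theorem stmt9 (U : Ultrafilter ℕ)
    (hidem : ∀ X : Set ℕ, X ∈ U → {n : ℕ | {m : ℕ | m + n ∈ X} ∈ U} ∈ U)
    (hmin : ∀ X : Set ℕ, X ∈ U → Syndetic {n : ℕ | {m : ℕ | m + n ∈ X} ∈ U})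
    {α : Type*} [MetricSpace α] [CompactSpace α]
    (T : α → α) (hT : Continuous T) (x : α) :
    ∃ y : α, (∀ ε : ℝ, 0 < ε → {n : ℕ | dist (T^[n] x) y < ε} ∈ U) ∧
      UniformlyRecurrent T y ∧ Proximal T x y := by
  obtain ⟨y, -, hy⟩ := isCompact_univ.ultrafilter_le_nhds (U.map fun k => T^[k] x) (by simp)
  have hx : Tendsto (fun k => T^[k] x) U (𝓝 y) := hy
  refine ⟨y, Metric.tendsto_nhds.1 hx, fun ε hε => ?_, ?_⟩
  · refine (hmin _ (Metric.tendsto_nhds.1 hx _ (half_pos hε))).mono fun n hn => ?_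
    exact (dist_iterate_le_of_tendsto hT hx n hn).trans_lt (half_lt_self hε)
  obtain rfl | hU := U.eq_pure_zero_or_le_atTop_of_idempotent hidem
  · obtain rfl : x = y := tendsto_nhds_unique (tendsto_pure_nhds _ 0) hx
    exact Proximal.refl_s9 T x
  have hy : Tendsto (fun n => T^[n] y) U (𝓝 y) :=
    tendsto_iterate_of_tendsto_iterate_of_idempotent U hidem hT hx
  exact proximal_of_tendsto_dist hU (by simpa using hx.dist hy)
end

section
/- If x, y and y, z are pairs of points in a compact metric dynamical system such that there is a single strictly increasing sequence (n_i) with IP-limit of T^n x equal to y along FS((n_i)) — then x and y are proximal. -/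
open Filter Topology

theorem self_mem_FS {a : ℕ → ℕ} {k i : ℕ} (hi : k ≤ i) : a i ∈ FS a k :=
  ⟨{i}, Finset.singleton_nonempty i, by simpa using hi, by simp⟩

theorem add_mem_FS {a : ℕ → ℕ} {k i j : ℕ} (hi : k ≤ i) (hj : k ≤ j) (hij : i ≠ j) :
    a i + a j ∈ FS a k :=
  ⟨{i, j}, Finset.insert_nonempty i {j}, by simp [hi, hj], (Finset.sum_pair hij).symm⟩

section IPLimit

variable {X : Type*} [MetricSpace X]

def IsIPLimit (T : X → X) (a : ℕ → ℕ) (x y : X) : Prop :=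
  ∀ ε : ℝ, 0 < ε → ∃ k : ℕ, ∀ s ∈ FS a k, dist (T^[s] x) y < ε

variable {T : X → X} {a : ℕ → ℕ} {x y : X}

theorem IsIPLimit.tendsto_iterate (h : IsIPLimit T a x y) :
    Tendsto (fun j => T^[a j] x) atTop (𝓝 y) := by
  refine Metric.tendsto_atTop.2 fun ε hε => ?_
  obtain ⟨k, hk⟩ := h ε hε
  exact ⟨k, fun j hj => hk _ (self_mem_FS hj)⟩

theorem IsIPLimit.dist_iterate_le (hT : Continuous T) (h : IsIPLimit T a x y) {ε : ℝ} {k m : ℕ}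
    (hk : ∀ s ∈ FS a k, dist (T^[s] x) y < ε) (hm : k ≤ m) :
    dist (T^[a m] y) y ≤ ε := by
  have hlim : Tendsto (fun j => T^[a m + a j] x) atTop (𝓝 (T^[a m] y)) := by
    simpa only [Function.iterate_add_apply, Function.comp_def] using
      ((hT.iterate (a m)).tendsto y).comp h.tendsto_iterate
  refine le_of_tendsto (hlim.dist tendsto_const_nhds) ?_
  filter_upwards [eventually_gt_atTop m] with j hj
  exact (hk _ (add_mem_FS hm (hm.trans hj.le) hj.ne)).le

end IPLimit

theorem stmt19_general {X : Type*} [MetricSpace X]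
    (T : X → X) (hT : Continuous T) (a : ℕ → ℕ) (ha : StrictMono a) (x y : X)
    (hlim : ∀ ε : ℝ, 0 < ε → ∃ k : ℕ, ∀ s ∈ FS a k, dist (T^[s] x) y < ε) :
    Proximal T x y := by
  have h : IsIPLimit T a x y := hlim
  intro ε hε N
  obtain ⟨k, hk⟩ := h (ε / 2) (half_pos hε)
  set m := max k N
  have hkm : k ≤ m := le_max_left k N
  refine ⟨a m, (le_max_right k N).trans ha.le_apply, ?_⟩
  calc dist (T^[a m] x) (T^[a m] y)
      ≤ dist (T^[a m] x) y + dist (T^[a m] y) y := dist_triangle_right _ _ _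
    _ < ε / 2 + ε / 2 :=
        add_lt_add_of_lt_of_le (hk _ (self_mem_FS hkm)) (h.dist_iterate_le hT hk hkm)
    _ = ε := add_halves ε

/-- If `y` is the IP-limit of `T^[n] x` along `FS((n_i))`, then `x` and `y` are
proximal. -/
theorem stmt19 {X : Type*} [MetricSpace X] [CompactSpace X]
    (T : X → X) (hT : Continuous T) (a : ℕ → ℕ) (ha : StrictMono a) (x y : X)
    (hlim : ∀ ε : ℝ, 0 < ε → ∃ k : ℕ, ∀ s ∈ FS a k, dist (T^[s] x) y < ε) :
    Proximal T x y :=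
  stmt19_general T hT a ha x y hlim
end
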